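/- Let u ∈ W₀^{1,p}(Ω) ∩ L^∞(Ω) be a critical point of I_α, i.e. a weak solution of −Δ_p u = −α^{−1} g((u−1)/α) + λ(u−1)_+^{q−1} in Ω. Then u satisfies the distributional inequalities ±Δ_p u ≤ (2/α) χ_{{|u−1|<α}} + λ ‖(u−1)_+‖_∞^{q−1} in Ω. -/

import Mathlib

open MeasureTheory Real Filter Metric Set Topology
open scoped Topology ENNReal NNReal RealInnerProductSpace

noncomputable section

/-- Euclidean space `ℝ^N`. -/
abbrev Eu (N : ℕ) : Type := EuclideanSpace ℝ (Fin N)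

/-- `φ` is a `C₀^∞` test function supported in `U`. -/
def IsTestFun {N : ℕ} (U : Set (Eu N)) (φ : Eu N → ℝ) : Prop :=
  ContDiff ℝ (⊤ : ℕ∞) φ ∧ HasCompactSupport φ ∧ tsupport φ ⊆ U

/-- The weak form of `-Δ_p u` tested against `φ` on `Ω`: `∫_Ω |∇u|^{p-2} ∇u · ∇φ dx`. -/
def pLap {N : ℕ} (Ω : Set (Eu N)) (p : ℝ) (u φ : Eu N → ℝ) : ℝ :=
  ∫ x in Ω, ‖gradient u x‖ ^ (p - 2) * ⟪gradient u x, gradient φ x⟫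

/-- Standing exponent assumptions: `N ≥ 2`, `1 < p ≤ q - 1` and `q < p* = Np/(N-p)`. -/
def ExponentsOK (N : ℕ) (p q : ℝ) : Prop :=
  2 ≤ N ∧ 1 < p ∧ p ≤ q - 1 ∧ p < N ∧ q < N * p / (N - p)

/-- The smooth bump `g : ℝ → [0,2]`, vanishing outside `(0,1)`, with `∫₀¹ g = 1`. -/
def IsCutoff (g : ℝ → ℝ) : Prop :=
  ContDiff ℝ (⊤ : ℕ∞) g ∧ (∀ t, 0 ≤ g t ∧ g t ≤ 2) ∧ (∀ t, t ∉ Set.Ioo (0:ℝ) 1 → g t = 0) ∧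
    (∫ t in (0:ℝ)..1, g t) = 1

/-- Membership in `W₀^{1,p}(Ω)`: a (differentiable representative of a) function
vanishing outside `Ω`, with `p`-integrable gradient. -/
def MemW01p {N : ℕ} (Ω : Set (Eu N)) (p : ℝ) (u : Eu N → ℝ) : Prop :=
  Differentiable ℝ u ∧ (∀ x ∉ Ω, u x = 0) ∧
    IntegrableOn (fun x => ‖gradient u x‖ ^ p) Ω volume

/-- The `W₀^{1,p}(Ω)` norm `‖u‖ = ‖∇u‖_{L^p(Ω)}`. -/
def wnorm {N : ℕ} (Ω : Set (Eu N)) (p : ℝ) (u : Eu N → ℝ) : ℝ :=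
  (∫ x in Ω, ‖gradient u x‖ ^ p) ^ (1/p)

/-- The approximating functional
`I_α(u) = ∫_Ω |∇u|^p/p dx + ∫_Ω G((u-1)/α) dx - λ ∫_Ω (u-1)_+^q/q dx`. -/
def Ifun {N : ℕ} (Ω : Set (Eu N)) (p q lam α : ℝ) (G : ℝ → ℝ) (u : Eu N → ℝ) : ℝ :=
  (∫ x in Ω, ‖gradient u x‖ ^ p / p) + (∫ x in Ω, G ((u x - 1) / α))
    - lam * ∫ x in Ω, (max (u x - 1) 0) ^ q / q

/-- A critical point of `I_α`: a weak solution of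
`-Δ_p u = -α⁻¹ g((u-1)/α) + λ (u-1)_+^{q-1}` in `Ω`. -/
def IsCritPt {N : ℕ} (Ω : Set (Eu N)) (p q lam α : ℝ) (g : ℝ → ℝ) (u : Eu N → ℝ) : Prop :=
  ∀ φ : Eu N → ℝ, IsTestFun Ω φ →
    pLap Ω p u φ
      = ∫ x in Ω, (-(1/α) * g ((u x - 1) / α) + lam * (max (u x - 1) 0) ^ (q - 1)) * φ x

/-- Let `u ∈ W₀^{1,p}(Ω) ∩ L^∞(Ω)` be a critical point of `I_α`. Then `u`
satisfies the distributional inequalities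
`±Δ_p u ≤ (2/α) χ_{{|u-1|<α}} + λ ‖(u-1)_+‖_∞^{q-1}` in `Ω`. -/
theorem statement10 {N : ℕ} (Ω : Set (Eu N)) (hΩo : IsOpen Ω) (hΩne : Ω.Nonempty)
    (hΩb : Bornology.IsBounded Ω) (p q : ℝ) (hpq : ExponentsOK N p q)
    (lam : ℝ) (hlam : 0 < lam) (g : ℝ → ℝ) (hg : IsCutoff g)
    (α : ℝ) (hα : 0 < α) (u : Eu N → ℝ) (hu : MemW01p Ω p u)
    (hbd : ∃ M : ℝ, ∀ x, |u x| ≤ M)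
    (hcrit : IsCritPt Ω p q lam α g u) :
    ∀ φ : Eu N → ℝ, IsTestFun Ω φ → (∀ x, 0 ≤ φ x) →
      pLap Ω p u φ
          ≤ (∫ x in Ω, ((2/α) * (if |u x - 1| < α then 1 else 0)
              + lam * (essSup (fun y => max (u y - 1) 0) (volume.restrict Ω)) ^ (q-1))
              * φ x) ∧
      -(pLap Ω p u φ)
          ≤ ∫ x in Ω, ((2/α) * (if |u x - 1| < α then 1 else 0)
              + lam * (essSup (fun y => max (u y - 1) 0) (volume.restrict Ω)) ^ (q-1))
              * φ x := by
  intro φ hφ hφ0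
  obtain ⟨hgc, hgb, hgz, -⟩ := hg
  obtain ⟨-, hp1, hpq1, -, -⟩ := hpq
  obtain ⟨hud, hu0, -⟩ := hu
  obtain ⟨B, hB⟩ := hbd
  have hB0 : 0 ≤ B := le_trans (abs_nonneg _) (hB 0)
  set M := essSup (fun y => max (u y - 1) 0) (volume.restrict Ω) with hMdef
  have hq0 : (0:ℝ) ≤ q - 1 := by linarith
  have huc : Continuous u := hud.continuous
  have hφc : Continuous φ := hφ.1.continuous
  have hφint : Integrable φ (volume.restrict Ω) :=
    (hφc.integrable_of_hasCompactSupport hφ.2.1).restrict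
  -- a.e. bound max ≤ M
  have hmax_nonneg : ∀ x : Eu N, 0 ≤ max (u x - 1) 0 := fun x => le_max_right _ _
  have hmax_le : ∀ x : Eu N, max (u x - 1) 0 ≤ B + 1 := by
    intro x
    have := abs_le.mp (hB x)
    exact max_le (by linarith [this.2]) (by linarith)
  have hbdd : IsBoundedUnder (· ≤ ·) (ae (volume.restrict Ω)) (fun y => max (u y - 1) 0) :=
    Filter.isBoundedUnder_of ⟨B + 1, hmax_le⟩
  have hae : ∀ᵐ x ∂(volume.restrict Ω), max (u x - 1) 0 ≤ M := ae_le_essSup hbdd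
  set f₁ : Eu N → ℝ :=
    fun x => (-(1/α) * g ((u x - 1) / α) + lam * (max (u x - 1) 0) ^ (q - 1)) with hf₁
  set f₂ : Eu N → ℝ :=
    fun x => ((2/α) * (if |u x - 1| < α then 1 else 0) + lam * M ^ (q-1)) with hf₂
  -- pointwise a.e. bound |f₁| ≤ f₂
  have key : ∀ᵐ x ∂(volume.restrict Ω), |f₁ x| ≤ f₂ x := by
    filter_upwards [hae] with x hx
    have hg1 : (1/α) * g ((u x - 1) / α) ≤ (2/α) * (if |u x - 1| < α then 1 else 0) := by
      by_cases h : |u x - 1| < α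
      · simp only [h, if_pos, mul_one]
        have := (hgb ((u x - 1) / α)).2
        have h1α : 0 ≤ 1/α := by positivity
        calc (1/α) * g ((u x - 1) / α) ≤ (1/α) * 2 := by
              exact mul_le_mul_of_nonneg_left this h1α
          _ = 2/α := by ring
      · have habs : α ≤ |u x - 1| := le_of_not_gt h
        have hz : g ((u x - 1) / α) = 0 := by
          apply hgz
          intro hmem
          rcases le_abs'.mp habs with h1 | h1
          · -- u x - 1 ≤ -α, so (u x -1)/α ≤ -1 < 0
            have : (u x - 1) / α ≤ -1 := by
              rw [div_le_iff₀ hα]; linarith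
            linarith [hmem.1]
          · -- u x - 1 ≥ α, so (u x - 1)/α ≥ 1
            have : 1 ≤ (u x - 1) / α := by
              rw [le_div_iff₀ hα]; linarith
            linarith [hmem.2]
        rw [hz, mul_zero, if_neg h, mul_zero]
    have hpow : lam * (max (u x - 1) 0) ^ (q - 1) ≤ lam * M ^ (q - 1) := by
      apply mul_le_mul_of_nonneg_left _ hlam.le
      exact Real.rpow_le_rpow (hmax_nonneg x) hx hq0
    have habs1 : |f₁ x| ≤ (1/α) * g ((u x - 1) / α) + lam * (max (u x - 1) 0) ^ (q - 1) := by
      rw [hf₁]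
      refine (abs_add_le _ _).trans ?_
      have e1 : |-(1/α) * g ((u x - 1) / α)| = (1/α) * g ((u x - 1) / α) := by
        rw [abs_mul, abs_neg, abs_of_nonneg (by positivity : (0:ℝ) ≤ 1/α),
          abs_of_nonneg (hgb _).1]
      have e2 : |lam * (max (u x - 1) 0) ^ (q - 1)| = lam * (max (u x - 1) 0) ^ (q - 1) := by
        rw [abs_of_nonneg (mul_nonneg hlam.le (Real.rpow_nonneg (hmax_nonneg x) _))]
      rw [e1, e2]
    calc |f₁ x| ≤ (1/α) * g ((u x - 1) / α) + lam * (max (u x - 1) 0) ^ (q - 1) := habs1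
      _ ≤ f₂ x := add_le_add hg1 hpow
  -- measurability / integrability
  have hf₁c : Continuous f₁ := by
    apply Continuous.add
    · exact continuous_const.mul (hgc.continuous.comp ((huc.sub continuous_const).div_const α))
    · exact continuous_const.mul
        (((huc.sub continuous_const).max continuous_const).rpow_const (fun x => Or.inr hq0))
  have hf₁bd : ∀ x, ‖f₁ x‖ ≤ (1/α) * 2 + lam * (B + 1) ^ (q - 1) := by
    intro x
    rw [Real.norm_eq_abs, hf₁]
    refine (abs_add_le _ _).trans (add_le_add ?_ ?_)
    · rw [abs_mul, abs_neg, abs_of_nonneg (by positivity : (0:ℝ) ≤ 1/α),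
        abs_of_nonneg (hgb _).1]
      exact mul_le_mul_of_nonneg_left (hgb _).2 (by positivity)
    · rw [abs_of_nonneg (mul_nonneg hlam.le (Real.rpow_nonneg (hmax_nonneg x) _))]
      exact mul_le_mul_of_nonneg_left
        (Real.rpow_le_rpow (hmax_nonneg x) (hmax_le x) hq0) hlam.le
  have hsetm : MeasurableSet {x : Eu N | |u x - 1| < α} :=
    (isOpen_lt ((huc.sub continuous_const).abs) continuous_const).measurableSet
  have hf₂m : Measurable f₂ := by
    apply Measurable.add
    · exact measurable_const.mul (Measurable.ite hsetm measurable_const measurable_const)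
    · exact measurable_const
  have hf₂bd : ∀ x, ‖f₂ x‖ ≤ 2/α + |lam * M ^ (q-1)| := by
    intro x
    rw [Real.norm_eq_abs, hf₂]
    refine (abs_add_le _ _).trans (add_le_add ?_ (le_refl _))
    rw [abs_mul, abs_of_nonneg (by positivity : (0:ℝ) ≤ 2/α)]
    have : |(if |u x - 1| < α then (1:ℝ) else 0)| ≤ 1 := by
      split <;> simp
    calc (2/α) * |(if |u x - 1| < α then (1:ℝ) else 0)| ≤ (2/α) * 1 :=
          mul_le_mul_of_nonneg_left this (by positivity)
      _ = 2/α := mul_one _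
  have hint1 : Integrable (fun x => f₁ x * φ x) (volume.restrict Ω) :=
    hφint.bdd_mul hf₁c.aestronglyMeasurable (Filter.Eventually.of_forall hf₁bd)
  have hint2 : Integrable (fun x => f₂ x * φ x) (volume.restrict Ω) :=
    hφint.bdd_mul hf₂m.aestronglyMeasurable (Filter.Eventually.of_forall hf₂bd)
  have hEq : pLap Ω p u φ = ∫ x in Ω, f₁ x * φ x := hcrit φ hφ
  have hmono1 : (∫ x in Ω, f₁ x * φ x) ≤ ∫ x in Ω, f₂ x * φ x := by
    apply integral_mono_ae hint1 hint2
    filter_upwards [key] with x hx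
    exact mul_le_mul_of_nonneg_right ((le_abs_self _).trans hx) (hφ0 x)
  have hmono2 : -(∫ x in Ω, f₁ x * φ x) ≤ ∫ x in Ω, f₂ x * φ x := by
    rw [← integral_neg]
    apply integral_mono_ae hint1.neg hint2
    filter_upwards [key] with x hx
    have : -f₁ x ≤ f₂ x := (neg_le_abs _).trans hx
    calc -(f₁ x * φ x) = (-f₁ x) * φ x := by ring
      _ ≤ f₂ x * φ x := mul_le_mul_of_nonneg_right this (hφ0 x)
  rw [hEq]
  exact ⟨hmono1, hmono2⟩
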